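/- For every positive integer n there exists a constant C > 0 such that for every v ∈ ℝⁿ and every w ∈ ℝⁿ with |w| ≤ 1/4: ∫_{B₂(0) \ B_{1/2}(0)} |arctan(v·(ξ+w)) − arctan(v·ξ)| dξ ≤ C |w|, where the integral is over the annulus {ξ ∈ ℝⁿ : 1/2 < |ξ| < 2} with respect to Lebesgue measure. -/

import Mathlib

/-!
Write `v = |v| u` with `|u| = 1`. The integrand depends on `ξ` only through `u · ξ`, so after an
orthogonal change of variables taking `u` to the first coordinate vector, and after enlarging the
annulus to a cube, Fubini reduces the estimate to one dimension. There
`|arctan (s + h) - arctan s| ≤ ∫_{[0, h]} dt / (1 + (s + t)²)`, and integrating first in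
`s = |v| y` over all of `ℝ` gives `π / |v|` for every `t`. Hence the one-dimensional integral is at
most `π |v · w| / |v| ≤ π |w|`.
-/

open MeasureTheory Real Set
open scoped Interval

theorem integral_inv_one_add_sq_mul_add {a : ℝ} (ha : 0 < a) (c : ℝ) :
    ∫ y : ℝ, (1 + (a * y + c) ^ 2)⁻¹ = π / a := by
  rw [Measure.integral_comp_mul_left (fun y => (1 + (y + c) ^ 2)⁻¹) a,
    integral_add_right_eq_self (fun y => (1 + y ^ 2)⁻¹) c, integral_univ_inv_one_add_sq,
    abs_of_pos (inv_pos.mpr ha), smul_eq_mul, inv_mul_eq_div]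

theorem integrable_inv_one_add_sq_mul_add {a : ℝ} (ha : a ≠ 0) (c : ℝ) :
    Integrable fun y : ℝ => (1 + (a * y + c) ^ 2)⁻¹ :=
  (integrable_inv_one_add_sq.comp_add_right c).comp_mul_left' ha

theorem abs_arctan_add_sub_arctan_le (s h : ℝ) :
    |arctan (s + h) - arctan s| ≤ ∫ t in Ι 0 h, (1 + (s + t) ^ 2)⁻¹ := by
  have hftc : ∫ t in (0 : ℝ)..h, (1 + (s + t) ^ 2)⁻¹ = arctan (s + h) - arctan s := by
    simp only [add_comm s, intervalIntegral.integral_comp_add_right (fun x => (1 + x ^ 2)⁻¹),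
      integral_inv_one_add_sq, zero_add]
  rw [← hftc, ← Real.norm_eq_abs]
  refine intervalIntegral.norm_integral_le_integral_norm_uIoc.trans_eq ?_
  simp only [Real.norm_eq_abs, abs_of_pos (by positivity : (0 : ℝ) < (1 + (s + _) ^ 2)⁻¹)]

theorem setIntegral_abs_arctan_mul_add_sub_arctan_le {s : Set ℝ} (hs : volume s ≠ ⊤)
    {a : ℝ} (ha : 0 < a) (h : ℝ) :
    ∫ y in s, |arctan (a * y + h) - arctan (a * y)| ≤ π * |h| / a := by
  have : IsFiniteMeasure (volume.restrict s) := isFiniteMeasure_restrict.mpr hs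
  have : IsFiniteMeasure (volume.restrict (Ι 0 h)) :=
    isFiniteMeasure_restrict.mpr measure_Ioc_lt_top.ne
  set K : ℝ → ℝ → ℝ := fun y t => (1 + (a * y + t) ^ 2)⁻¹
  have hK : Integrable (Function.uncurry K)
      ((volume.restrict s).prod (volume.restrict (Ι 0 h))) := by
    refine Integrable.of_bound (C := 1) (Continuous.aestronglyMeasurable ?_)
      (ae_of_all _ fun p => ?_)
    · exact Continuous.inv₀ (by fun_prop) fun p => by positivity
    · rw [Real.norm_eq_abs, abs_of_pos (inv_pos.mpr (by positivity))]
      exact inv_le_one_of_one_le₀ (le_add_of_nonneg_right (sq_nonneg _))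
  calc ∫ y in s, |arctan (a * y + h) - arctan (a * y)|
      ≤ ∫ y in s, ∫ t in Ι 0 h, K y t :=
        integral_mono_of_nonneg (ae_of_all _ fun _ => abs_nonneg _) hK.integral_prod_left
          (ae_of_all _ fun y => abs_arctan_add_sub_arctan_le (a * y) h)
    _ = ∫ t in Ι 0 h, ∫ y in s, K y t := integral_integral_swap hK
    _ ≤ ∫ t in Ι 0 h, π / a := by
        refine integral_mono_of_nonneg (ae_of_all _ fun t => integral_nonneg fun y => ?_)
          (integrable_const _) (ae_of_all _ fun t => ?_)
        · exact inv_nonneg.mpr (by positivity)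
        · rw [← integral_inv_one_add_sq_mul_add ha t]
          exact setIntegral_le_integral (integrable_inv_one_add_sq_mul_add ha.ne' t)
            (ae_of_all _ fun y => by positivity)
    _ = π * |h| / a := by
        rw [setIntegral_const, measureReal_def, Real.volume_uIoc, sub_zero,
          ENNReal.toReal_ofReal (abs_nonneg h), smul_eq_mul]
        ring

theorem setIntegral_ball_comp_apply_zero_le {m : ℕ} {g : ℝ → ℝ} (hg : Continuous g)
    (hg0 : 0 ≤ g) {r : ℝ} (hr : 0 ≤ r) :
    ∫ x in Metric.ball (0 : EuclideanSpace ℝ (Fin (m + 1))) r, g (x 0)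
      ≤ (2 * r) ^ m * ∫ y in Ioo (-r) r, g y := by
  let e := (MeasurableEquiv.toLp 2 (Fin (m + 1) → ℝ)).symm.trans
    (MeasurableEquiv.piFinSuccAbove (fun _ => ℝ) 0)
  have he : MeasurePreserving e volume volume :=
    (volume_preserving_piFinSuccAbove (fun _ => ℝ) 0).comp
      (EuclideanSpace.volume_preserving_symm_measurableEquiv_toLp _)
  let cube : Set (Fin m → ℝ) := univ.pi fun _ => Ioo (-r) r
  have hball : Metric.ball 0 r ⊆ e ⁻¹' (Ioo (-r) r ×ˢ cube) := by
    intro x hx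
    have hcoord (i : Fin (m + 1)) : x i ∈ Ioo (-r) r := by
      rw [mem_Ioo, ← abs_lt, ← Real.norm_eq_abs]
      exact (PiLp.norm_apply_le x i).trans_lt (mem_ball_zero_iff.mp hx)
    exact ⟨hcoord 0, fun j _ => hcoord _⟩
  have hint : IntegrableOn (fun p : ℝ × (Fin m → ℝ) => g p.1) (Ioo (-r) r ×ˢ cube) :=
    ((hg.comp continuous_fst).continuousOn.integrableOn_compact
      (isCompact_Icc.prod (isCompact_univ_pi fun _ => isCompact_Icc))).mono_set
      (prod_mono Ioo_subset_Icc_self (pi_mono fun _ _ => Ioo_subset_Icc_self))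
  calc ∫ x in Metric.ball (0 : EuclideanSpace ℝ (Fin (m + 1))) r, g (x 0)
      ≤ ∫ x in e ⁻¹' (Ioo (-r) r ×ˢ cube), g (e x).1 :=
        setIntegral_mono_set ((he.integrableOn_comp_preimage e.measurableEmbedding).mpr hint)
          (ae_of_all _ fun _ => hg0 _) hball.eventuallyLE
    _ = ∫ p in Ioo (-r) r ×ˢ cube, g p.1 :=
        he.setIntegral_preimage_emb e.measurableEmbedding (fun p => g p.1) _
    _ = (∫ y in Ioo (-r) r, g y) * ∫ _ in cube, (1 : ℝ) := by
        rw [Measure.volume_eq_prod, ← setIntegral_prod_mul g (fun _ => (1 : ℝ))]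
        simp only [mul_one]
    _ = (2 * r) ^ m * ∫ y in Ioo (-r) r, g y := by
        rw [setIntegral_const, smul_eq_mul, mul_one, measureReal_def, volume_pi_pi]
        simp only [volume_Ioo, sub_neg_eq_add, Finset.prod_const, Finset.card_univ,
          Fintype.card_fin, ENNReal.toReal_pow, nonneg_add_self_iff, hr, ENNReal.toReal_ofReal]
        ring

theorem setIntegral_ball_comp_inner_le {m : ℕ} {u : EuclideanSpace ℝ (Fin (m + 1))}
    (hu : ‖u‖ = 1) {g : ℝ → ℝ} (hg : Continuous g) (hg0 : 0 ≤ g) {r : ℝ} (hr : 0 ≤ r) :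
    ∫ x in Metric.ball (0 : EuclideanSpace ℝ (Fin (m + 1))) r, g (inner ℝ u x)
      ≤ (2 * r) ^ m * ∫ y in Ioo (-r) r, g y := by
  have hu' : Orthonormal ℝ (({0} : Set (Fin (m + 1))).domRestrict fun _ => u) :=
    ⟨fun _ => hu, fun i j hij => absurd (Subsingleton.elim i j) hij⟩
  obtain ⟨b, hb⟩ := hu'.exists_orthonormalBasis_extension_of_card_eq (by simp)
  have hrepr (x : EuclideanSpace ℝ (Fin (m + 1))) : inner ℝ u x = b.repr x 0 := by
    rw [b.repr_apply_apply, hb 0 rfl]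
  have hball : b.repr ⁻¹' Metric.ball 0 r = Metric.ball 0 r := by
    rw [LinearIsometryEquiv.preimage_ball, map_zero]
  calc ∫ x in Metric.ball 0 r, g (inner ℝ u x)
      = ∫ x in b.repr ⁻¹' Metric.ball 0 r, g (b.repr x 0) := by simp_rw [hball, hrepr]
    _ = ∫ y in Metric.ball (0 : EuclideanSpace ℝ (Fin (m + 1))) r, g (y 0) :=
        b.measurePreserving_repr.setIntegral_preimage_emb
          b.repr.toHomeomorph.measurableEmbedding (fun y => g (y 0)) _
    _ ≤ (2 * r) ^ m * ∫ y in Ioo (-r) r, g y := setIntegral_ball_comp_apply_zero_le hg hg0 hr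

theorem setIntegral_ball_abs_arctan_inner_add_sub_le {m : ℕ}
    {v : EuclideanSpace ℝ (Fin (m + 1))} (hv : v ≠ 0) (w : EuclideanSpace ℝ (Fin (m + 1)))
    {r : ℝ} (hr : 0 ≤ r) :
    ∫ ξ in Metric.ball 0 r, |arctan (inner ℝ v (ξ + w)) - arctan (inner ℝ v ξ)|
      ≤ (2 * r) ^ m * (π * |inner ℝ v w| / ‖v‖) := by
  have ha : 0 < ‖v‖ := norm_pos_iff.mpr hv
  set g : ℝ → ℝ := fun y => |arctan (‖v‖ * y + inner ℝ v w) - arctan (‖v‖ * y)|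
  have hg : Continuous g := by fun_prop
  have hintegrand (ξ : EuclideanSpace ℝ (Fin (m + 1))) :
      |arctan (inner ℝ v (ξ + w)) - arctan (inner ℝ v ξ)| = g (inner ℝ (‖v‖⁻¹ • v) ξ) := by
    rw [real_inner_smul_left]
    simp only [g, mul_inv_cancel_left₀ ha.ne', inner_add_right]
  simp_rw [hintegrand]
  calc ∫ ξ in Metric.ball 0 r, g (inner ℝ (‖v‖⁻¹ • v) ξ)
      ≤ (2 * r) ^ m * ∫ y in Ioo (-r) r, g y :=
        setIntegral_ball_comp_inner_le (norm_smul_inv_norm hv) hg (fun _ => abs_nonneg _) hr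
    _ ≤ (2 * r) ^ m * (π * |inner ℝ v w| / ‖v‖) := by
        gcongr
        exact setIntegral_abs_arctan_mul_add_sub_arctan_le (by simp) ha _

theorem stmt16 (n : ℕ) :
    ∃ C : ℝ, 0 < C ∧ ∀ v w : EuclideanSpace ℝ (Fin n), ‖w‖ ≤ 1 / 4 →
      (∫ ξ in Metric.ball (0 : EuclideanSpace ℝ (Fin n)) 2 \
          Metric.ball (0 : EuclideanSpace ℝ (Fin n)) (1 / 2),
        |Real.arctan (inner ℝ v (ξ + w) : ℝ) - Real.arctan (inner ℝ v ξ : ℝ)|)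
        ≤ C * ‖w‖ := by
  refine ⟨π * 4 ^ (n - 1), by positivity, fun v w _ => ?_⟩
  rcases eq_or_ne v 0 with rfl | hv
  · simp only [inner_zero_left, sub_self, abs_zero, integral_zero]
    positivity
  obtain ⟨m, rfl⟩ : ∃ m, n = m + 1 :=
    Nat.exists_eq_succ_of_ne_zero fun hn => hv (by subst hn; exact Subsingleton.elim _ _)
  have hcont : Continuous fun ξ : EuclideanSpace ℝ (Fin (m + 1)) =>
      |arctan (inner ℝ v (ξ + w)) - arctan (inner ℝ v ξ)| := by
    fun_prop
  have hint := (hcont.continuousOn.integrableOn_compact (μ := volume)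
    (isCompact_closedBall 0 2)).mono_set Metric.ball_subset_closedBall
  calc ∫ ξ in Metric.ball 0 2 \ Metric.ball 0 (1 / 2),
        |arctan (inner ℝ v (ξ + w)) - arctan (inner ℝ v ξ)|
      ≤ ∫ ξ in Metric.ball 0 2, |arctan (inner ℝ v (ξ + w)) - arctan (inner ℝ v ξ)| :=
        setIntegral_mono_set hint (ae_of_all _ fun _ => abs_nonneg _) sdiff_subset.eventuallyLE
    _ ≤ (2 * 2) ^ m * (π * |inner ℝ v w| / ‖v‖) :=
        setIntegral_ball_abs_arctan_inner_add_sub_le hv w zero_le_two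
    _ ≤ (2 * 2) ^ m * (π * ‖w‖) := by
        rw [mul_div_assoc]
        gcongr
        exact (div_le_iff₀' (norm_pos_iff.mpr hv)).mpr (abs_real_inner_le_norm v w)
    _ = π * 4 ^ (m + 1 - 1) * ‖w‖ := by
        rw [Nat.add_sub_cancel]
        ring
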